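/- arXiv:1410.7213 — 2 statements merged into one kernel-verified Lean document; each statement's English description precedes it below -/
import Mathlib

section
/- Let n ≥ 11 and 3 ≤ r ≤ n−5. Then ex(n−1+r;T_n*) = ex(n−1+r;{K_{1,n−2},T_n*}). -/
open SimpleGraph

/-- `G` contains a copy of `H` as a subgraph: there is an injective map
preserving adjacency. -/
def ContainsCopy {V : Type*} {W : Type*} (G : SimpleGraph V) (H : SimpleGraph W) : Prop :=
  ∃ f : W ↪ V, ∀ a b, H.Adj a b → G.Adj (f a) (f b)

/-- `exNum p H` is the maximal number of edges in a simple graph of order `p`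
not containing a copy of `H`. -/
noncomputable def exNum (p : ℕ) {W : Type*} (H : SimpleGraph W) : ℕ :=
  sSup {m : ℕ | ∃ G : SimpleGraph (Fin p), ¬ ContainsCopy G H ∧ Nat.card G.edgeSet = m}

/-- `exNum2 p H₁ H₂` is the maximal number of edges in a simple graph of order `p`
containing no copy of `H₁` and no copy of `H₂`. -/
noncomputable def exNum2 (p : ℕ) {W₁ W₂ : Type*} (H₁ : SimpleGraph W₁) (H₂ : SimpleGraph W₂) : ℕ :=
  sSup {m : ℕ | ∃ G : SimpleGraph (Fin p),
    ¬ ContainsCopy G H₁ ∧ ¬ ContainsCopy G H₂ ∧ Nat.card G.edgeSet = m}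

/-- The tree `T_n` on vertices `v_0, …, v_{n-1}` with edges
`v_0v_1, …, v_0v_{n-2}` and `v_{n-2}v_{n-1}`: the unique tree on `n` vertices
of maximal degree `n-2`. -/
def Tn (n : ℕ) : SimpleGraph (Fin n) :=
  SimpleGraph.fromRel (fun a b =>
    (a.val = 0 ∧ 1 ≤ b.val ∧ b.val ≤ n - 2) ∨ (a.val = n - 2 ∧ b.val = n - 1))

/-- The tree `T_n^*` on vertices `v_0, …, v_{n-1}` with edges
`v_0v_1, …, v_0v_{n-3}`, `v_{n-3}v_{n-2}` and `v_{n-2}v_{n-1}`. -/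
def TnStar (n : ℕ) : SimpleGraph (Fin n) :=
  SimpleGraph.fromRel (fun a b =>
    (a.val = 0 ∧ 1 ≤ b.val ∧ b.val ≤ n - 3) ∨ (a.val = n - 3 ∧ b.val = n - 2) ∨
    (a.val = n - 2 ∧ b.val = n - 1))

/-!
A graph avoiding both trees avoids `T_n^*`, so only `ex(p; T_n^*) ≤ ex(p; {K_{1,n-2}, T_n^*})`
needs proof, for `p = n - 1 + r`. A `T_n^*`-free graph with no vertex of degree `n - 2` is
`K_{1,n-2}`-free. If `deg u ≥ n - 2`, then for every path `u x y z` with `x ∈ N(u)` the set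
`N(u) \ {x, y, z}` has fewer than `n - 4` elements, since otherwise it supplies the leaves of a
`T_n^*` centred at `u`. Hence such paths stay inside `N(u)`, which caps all other degrees and gives
`2e ≤ (n-1)(n-2) + r(r-1)`. A graph free of both trees has at least that many edges: an
independent set of size `r + 2` joined to an almost `(n - r - 6)`-regular graph on `n - 3`
vertices. Its maximum degree is `n - 3`, and every vertex of degree `n - 3` has an independent
non-neighbourhood, which leaves no room for the tail of a `T_n^*`.
-/

open Finset
open scoped Pointwise

namespace SimpleGraph

variable {V W : Type*}

section Copies

variable {G : SimpleGraph V} {H : SimpleGraph W}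

theorem containsCopy_iff_isContained : ContainsCopy G H ↔ H ⊑ G := by
  rw [isContained_iff_exists_le_comap]
  exact exists_congr fun _ => ⟨fun h _ _ => h _ _, fun h _ _ => @h _ _⟩

theorem containsCopy_congr {V' : Type*} {G' : SimpleGraph V'} (e : G ≃g G') :
    ContainsCopy G H ↔ ContainsCopy G' H := by
  simp only [containsCopy_iff_isContained, isContained_congr_right e]

theorem tnStar_adj {n : ℕ} {a b : Fin n} : (TnStar n).Adj a b ↔ a ≠ b ∧
    ((a.val = 0 ∧ 1 ≤ b.val ∧ b.val ≤ n - 3 ∨ a.val = n - 3 ∧ b.val = n - 2 ∨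
        a.val = n - 2 ∧ b.val = n - 1) ∨
      (b.val = 0 ∧ 1 ≤ a.val ∧ a.val ≤ n - 3 ∨ b.val = n - 3 ∧ a.val = n - 2 ∨
        b.val = n - 2 ∧ a.val = n - 1)) := by
  simp [TnStar]

theorem containsCopy_tnStar_of_list {m : ℕ} (L : List V) (hlen : L.length = m + 4)
    (hnodup : L.Nodup) (hadj : ∀ a b (ha : a < m + 4) (hb : b < m + 4),
      (a = 0 ∧ 1 ≤ b ∧ b ≤ m + 1 ∨ a = m + 1 ∧ b = m + 2 ∨ a = m + 2 ∧ b = m + 3) →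
      G.Adj L[a] L[b]) :
    ContainsCopy G (TnStar (m + 4)) := by
  refine ⟨⟨fun i => L[i.val], fun i j h => Fin.ext ((hnodup.getElem_inj_iff).1 h)⟩, ?_⟩
  intro a b hab
  rw [tnStar_adj] at hab
  simp only [show m + 4 - 3 = m + 1 by omega, show m + 4 - 2 = m + 2 by omega,
    show m + 4 - 1 = m + 3 by omega] at hab
  rcases hab.2 with h | h
  · exact hadj _ _ a.2 b.2 h
  · exact (hadj _ _ b.2 a.2 h).symm

variable [Fintype V] [DecidableRel G.Adj]

theorem containsCopy_star_iff (k : ℕ) :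
    ContainsCopy G (completeBipartiteGraph (Fin 1) (Fin k)) ↔ ∃ v, k ≤ G.degree v := by
  constructor
  · rintro ⟨f, hf⟩
    refine ⟨f (.inl 0), ?_⟩
    classical
    calc k = #((univ : Finset (Fin k)).map (Function.Embedding.inr.trans f)) := by simp
      _ ≤ G.degree (f (.inl 0)) := by
        rw [← card_neighborFinset_eq_degree]
        refine card_le_card fun w hw => ?_
        obtain ⟨i, -, rfl⟩ := mem_map.1 hw
        simpa using hf (.inl 0) (.inr i) (by simp)
  · rintro ⟨v, hv⟩
    rw [← card_neighborSet_eq_degree, ← Fintype.card_fin k] at hv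
    obtain ⟨e⟩ := Function.Embedding.nonempty_of_card_le hv
    have hinj : Function.Injective (Sum.elim (fun _ : Fin 1 => v) (Subtype.val ∘ e)) :=
      Function.Injective.sumElim (fun _ _ _ => Subsingleton.elim _ _)
        (Subtype.val_injective.comp e.injective) fun _ i h => G.ne_of_adj (e i).2 h
    refine ⟨⟨_, hinj⟩, ?_⟩
    rintro (a | a) (b | b) hab <;> simp at hab
    · exact (e b).2
    · exact ((e a).2).symm

end Copies

variable [Fintype V] [DecidableEq V] {G : SimpleGraph V} [DecidableRel G.Adj] {n : ℕ}
  {u v x y z : V}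

theorem containsCopy_tnStar_of_path {m : ℕ} (hux : G.Adj u x) (hxy : G.Adj x y)
    (hyz : G.Adj y z) (huy : u ≠ y) (huz : u ≠ z) (hxz : x ≠ z)
    (hcard : m ≤ #(G.neighborFinset u \ {x, y, z})) : ContainsCopy G (TnStar (m + 4)) := by
  rw [← Fintype.card_fin m, ← Fintype.card_coe] at hcard
  obtain ⟨g⟩ := Function.Embedding.nonempty_of_card_le hcard
  have hg : ∀ i, G.Adj u (g i) ∧ (g i : V) ≠ x ∧ (g i : V) ≠ y ∧ (g i : V) ≠ z := by
    intro i
    obtain ⟨h₁, h₂⟩ := mem_sdiff.1 (g i).2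
    simp only [mem_neighborFinset, mem_insert, mem_singleton, not_or] at h₁ h₂
    exact ⟨h₁, h₂⟩
  set L := u :: (List.ofFn (fun i => (g i : V)) ++ [x, y, z])
  have hlen : L.length = m + 4 := by simp [L]
  have hnodup : L.Nodup := by
    simp only [L, List.nodup_cons, List.mem_append, List.mem_ofFn, List.nodup_append,
      List.nodup_ofFn]
    refine ⟨?_, Subtype.val_injective.comp g.injective, by simp [hxy.ne, hxz, hyz.ne], ?_⟩
    · simp only [not_or, not_exists, List.mem_cons, List.not_mem_nil]
      exact ⟨fun i => (hg i).1.ne', hux.ne, huy, huz, not_false⟩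
    · rintro _ ⟨i, rfl⟩ b hb
      simp only [List.mem_cons, List.not_mem_nil, or_false] at hb
      rcases hb with rfl | rfl | rfl <;> simp [hg i]
  have h0 : L[0] = u := rfl
  have hgi : ∀ j (hj : j < m), L[j + 1]'(by omega) = g ⟨j, hj⟩ := fun j hj => by
    simp [L, List.getElem_append_left, hj]
  have hx : L[m + 1]'(by omega) = x := by simp [L]
  have hy : L[m + 2]'(by omega) = y := by simp [L]
  have hz : L[m + 3]'(by omega) = z := by simp [L]
  refine containsCopy_tnStar_of_list L hlen hnodup ?_
  rintro a b ha hb (⟨rfl, hb1, hb2⟩ | ⟨rfl, rfl⟩ | ⟨rfl, rfl⟩)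
  · obtain ⟨j, rfl⟩ : ∃ j, b = j + 1 := ⟨b - 1, by omega⟩
    rcases Nat.lt_or_ge j m with hj | hj
    · rw [h0, hgi j hj]; exact (hg _).1
    · obtain rfl : j = m := by omega
      rwa [h0, hx]
  · rwa [hx, hy]
  · rwa [hy, hz]

theorem exists_path_of_containsCopy_tnStar (hn : 4 ≤ n) (h : ContainsCopy G (TnStar n)) :
    ∃ u x y z, G.Adj u x ∧ G.Adj x y ∧ G.Adj y z ∧ u ≠ y ∧ u ≠ z ∧ x ≠ z ∧
      n - 4 ≤ #(G.neighborFinset u \ {x, y, z}) := by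
  obtain ⟨f, hf⟩ := h
  have hne : ∀ {a b : Fin n}, a.val ≠ b.val → f a ≠ f b :=
    fun h => f.injective.ne (Fin.val_ne_iff.1 h)
  let leaf : Fin (n - 4) ↪ Fin n := (Fin.succEmb _).trans (Fin.castLEEmb (by omega))
  refine ⟨f ⟨0, by omega⟩, f ⟨n - 3, by omega⟩, f ⟨n - 2, by omega⟩, f ⟨n - 1, by omega⟩,
    hf _ _ (by rw [tnStar_adj]; simp; omega), hf _ _ (by rw [tnStar_adj]; simp; omega),
    hf _ _ (by rw [tnStar_adj]; simp; omega), hne (by simp; omega), hne (by simp; omega),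
    hne (by simp; omega), ?_⟩
  calc n - 4 = #(univ.map (leaf.trans f)) := by simp
    _ ≤ _ := card_le_card fun w hw => by
      obtain ⟨j, -, rfl⟩ := mem_map.1 hw
      have := j.2
      simp only [mem_sdiff, mem_neighborFinset, mem_insert, mem_singleton, not_or]
      refine ⟨hf _ _ (by rw [tnStar_adj]; simp [leaf, Fin.ext_iff]; omega),
        hne ?_, hne ?_, hne ?_⟩ <;> simp [leaf] <;> omega

theorem containsCopy_tnStar_iff (hn : 4 ≤ n) :
    ContainsCopy G (TnStar n) ↔ ∃ u x y z, G.Adj u x ∧ G.Adj x y ∧ G.Adj y z ∧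
      u ≠ y ∧ u ≠ z ∧ x ≠ z ∧ n - 4 ≤ #(G.neighborFinset u \ {x, y, z}) := by
  refine ⟨exists_path_of_containsCopy_tnStar hn, ?_⟩
  rintro ⟨u, x, y, z, hux, hxy, hyz, huy, huz, hxz, hcard⟩
  obtain ⟨m, rfl⟩ : ∃ m, n = m + 4 := ⟨n - 4, by omega⟩
  exact containsCopy_tnStar_of_path hux hxy hyz huy huz hxz (by simpa using hcard)

section TnStarFree

variable (hfree : ¬ContainsCopy G (TnStar n)) (hn : 4 ≤ n)
include hfree hn

/-- If this failed, `N(u) \ {x, y, z}` would supply the `n - 4` leaves of a `T_n^*` centred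
at `u`. -/
theorem degree_add_four_lt_add_card_inter (hux : G.Adj u x) (hxy : G.Adj x y) (hyz : G.Adj y z)
    (huy : u ≠ y) (huz : u ≠ z) (hxz : x ≠ z) :
    G.degree u + 4 < n + #(G.neighborFinset u ∩ {x, y, z}) := by
  have hsplit := card_sdiff_add_card_inter (G.neighborFinset u) {x, y, z}
  rw [card_neighborFinset_eq_degree] at hsplit
  by_contra! h
  exact hfree ((containsCopy_tnStar_iff hn).2
    ⟨u, x, y, z, hux, hxy, hyz, huy, huz, hxz, by omega⟩)

theorem degree_le_of_le_degree (hu : n - 1 ≤ G.degree u) (hvu : v ≠ u) :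
    G.degree v ≤ max 2 (Fintype.card V - G.degree u) := by
  rw [← card_neighborFinset_eq_degree]
  by_cases hx : ∃ x, G.Adj u x ∧ G.Adj x v
  · obtain ⟨x, hux, hxv⟩ := hx
    have hsub : G.neighborFinset v ⊆ {u, x} := fun z hz => by
      by_contra hzux
      simp only [mem_insert, mem_singleton, not_or] at hzux
      rw [mem_neighborFinset] at hz
      have := degree_add_four_lt_add_card_inter hfree hn hux hxv hz hvu.symm (Ne.symm hzux.1)
        (Ne.symm hzux.2)
      have := (card_le_card (inter_subset_right (s₁ := G.neighborFinset u))).trans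
        (card_le_three (a := x) (b := v) (c := z))
      omega
    exact (card_le_card hsub).trans (card_le_two.trans (le_max_left _ _))
  · push Not at hx
    have hsub : G.neighborFinset v ⊆ univ \ G.neighborFinset u := fun w hw => by
      simp only [mem_sdiff, mem_univ, mem_neighborFinset, true_and] at hw ⊢
      exact fun huw => hx w huw hw.symm
    calc #(G.neighborFinset v) ≤ #(univ \ G.neighborFinset u) := card_le_card hsub
      _ = Fintype.card V - G.degree u := by
        rw [card_univ_sdiff, card_neighborFinset_eq_degree]
      _ ≤ _ := le_max_right _ _

theorem degree_le_of_adj_of_degree_eq (hu : G.degree u = n - 2) (hux : G.Adj u x) :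
    G.degree x ≤ max (n - 2) (Fintype.card V - (n - 2)) := by
  rw [← card_neighborFinset_eq_degree]
  by_cases hy : ∃ y, y ≠ u ∧ ¬G.Adj u y ∧ G.Adj x y
  · obtain ⟨y, hyu, huy, hxy⟩ := hy
    have hsub : G.neighborFinset x ⊆ univ \ G.neighborFinset u := fun w hw => by
      simp only [mem_sdiff, mem_univ, mem_neighborFinset, true_and] at hw ⊢
      intro huw
      have := degree_add_four_lt_add_card_inter hfree hn huw hw.symm hxy hux.ne (Ne.symm hyu)
        (fun h => huy (h ▸ huw))
      have : G.neighborFinset u ∩ {w, x, y} ⊆ {w, x} := fun t ht => by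
        simp only [mem_inter, mem_neighborFinset, mem_insert, mem_singleton] at ht ⊢
        obtain ⟨hut, rfl | rfl | rfl⟩ := ht <;> simp_all
      have := (card_le_card this).trans card_le_two
      omega
    calc #(G.neighborFinset x) ≤ #(univ \ G.neighborFinset u) := card_le_card hsub
      _ = Fintype.card V - (n - 2) := by
        rw [card_univ_sdiff, card_neighborFinset_eq_degree, hu]
      _ ≤ _ := le_max_right _ _
  · push Not at hy
    have hsub : G.neighborFinset x ⊆ (insert u (G.neighborFinset u)).erase x := fun w hw => by
      rw [mem_neighborFinset] at hw
      simp only [mem_erase, mem_insert, mem_neighborFinset]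
      exact ⟨hw.ne', or_iff_not_imp_left.2 fun hwu => by_contra fun huw => hy w hwu huw hw⟩
    calc #(G.neighborFinset x) ≤ #((insert u (G.neighborFinset u)).erase x) := card_le_card hsub
      _ = n - 2 := by
        rw [card_erase_of_mem (mem_insert_of_mem (by simpa using hux)),
          card_insert_of_notMem (by simp), card_neighborFinset_eq_degree, hu, Nat.add_sub_cancel]
      _ ≤ _ := le_max_left _ _

theorem degree_le_of_not_adj_of_degree_eq (hu : G.degree u = n - 2) (hvu : v ≠ u)
    (huv : ¬G.Adj u v) : G.degree v ≤ max 1 (Fintype.card V - (n - 1) - 1) := by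
  rw [← card_neighborFinset_eq_degree]
  by_cases hx : ∃ x, G.Adj u x ∧ G.Adj x v
  · obtain ⟨x, hux, hxv⟩ := hx
    have hsub : G.neighborFinset v ⊆ {x} := fun z hz => by
      rw [mem_neighborFinset] at hz
      rw [mem_singleton]
      by_contra hzx
      have := degree_add_four_lt_add_card_inter hfree hn hux hxv hz hvu.symm
        (fun h => huv (h ▸ hz.symm)) (Ne.symm hzx)
      have : G.neighborFinset u ∩ {x, v, z} ⊆ {x, z} := fun t ht => by
        simp only [mem_inter, mem_neighborFinset, mem_insert, mem_singleton] at ht ⊢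
        obtain ⟨hut, rfl | rfl | rfl⟩ := ht <;> simp_all
      have := (card_le_card this).trans card_le_two
      omega
    exact (card_le_card hsub).trans (by simp)
  · push Not at hx
    have hsub : G.neighborFinset v ⊆ (univ \ insert u (G.neighborFinset u)).erase v :=
      fun w hw => by
        rw [mem_neighborFinset] at hw
        simp only [mem_erase, mem_sdiff, mem_univ, mem_insert, mem_neighborFinset, true_and,
          not_or]
        exact ⟨hw.ne', fun h => huv (h ▸ hw.symm), fun huw => hx w huw hw.symm⟩
    calc #(G.neighborFinset v) ≤ #((univ \ insert u (G.neighborFinset u)).erase v) :=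
          card_le_card hsub
      _ = Fintype.card V - (n - 1) - 1 := by
        rw [card_erase_of_mem (by simp [hvu, huv]), card_univ_sdiff,
          card_insert_of_notMem (by simp), card_neighborFinset_eq_degree, hu]
        omega
      _ ≤ _ := le_max_right _ _

end TnStarFree

theorem sum_degrees_le_of_lt_degree {r : ℕ} (hfree : ¬ContainsCopy G (TnStar n))
    (hV : Fintype.card V = n - 1 + r) (hr : 2 ≤ r) (hrn : r + 4 ≤ n) (hu : n - 2 < G.degree u) :
    ∑ v, G.degree v ≤ (n - 1) * (n - 2) + r * (r - 1) := by
  have hdeg : ∀ v, G.degree v ≤ r + if v = u then n - 2 else 0 := fun v => by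
    split_ifs with hvu
    · have := G.degree_lt_card_verts v
      omega
    · have := degree_le_of_le_degree hfree (by omega) (v := v) (by omega) hvu
      omega
  calc ∑ v, G.degree v ≤ ∑ v, (r + if v = u then n - 2 else 0) := sum_le_sum fun v _ => hdeg v
    _ = (n - 1 + r) * r + (n - 2) := by simp [sum_add_distrib, hV]
    _ ≤ _ := by
      obtain ⟨a, rfl⟩ := Nat.exists_eq_add_of_le hrn
      obtain ⟨b, rfl⟩ := Nat.exists_eq_add_of_le hr
      simp only [show 2 + b + 4 + a - 1 = b + a + 5 by omega,
        show 2 + b + 4 + a - 2 = b + a + 4 by omega, show 2 + b - 1 = b + 1 by omega]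
      nlinarith

theorem sum_degrees_le_of_degree_eq {r : ℕ} (hfree : ¬ContainsCopy G (TnStar n))
    (hV : Fintype.card V = n - 1 + r) (hr : 2 ≤ r) (hrn : r + 3 ≤ n) (hu : G.degree u = n - 2) :
    ∑ v, G.degree v ≤ (n - 1) * (n - 2) + r * (r - 1) := by
  have hdeg : ∀ v, G.degree v ≤ if v = u ∨ G.Adj u v then n - 2 else r - 1 := fun v => by
    split_ifs with hv
    · rcases hv with rfl | huv
      · exact hu.le
      · have := degree_le_of_adj_of_degree_eq hfree (by omega) hu huv
        omega
    · push Not at hv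
      have := degree_le_of_not_adj_of_degree_eq hfree (by omega) hu hv.1 hv.2
      omega
  have hcard : #{v | v = u ∨ G.Adj u v} = n - 1 := by
    rw [show ({v | v = u ∨ G.Adj u v} : Finset V) = insert u (G.neighborFinset u) by
        ext; simp [eq_comm],
      card_insert_of_notMem (by simp), card_neighborFinset_eq_degree, hu]
    omega
  have hsplit := card_filter_add_card_filter_not (s := univ) (fun v => v = u ∨ G.Adj u v)
  rw [hcard, card_univ, hV] at hsplit
  calc ∑ v, G.degree v ≤ ∑ v, (if v = u ∨ G.Adj u v then n - 2 else r - 1) :=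
        sum_le_sum fun v _ => hdeg v
    _ = (n - 1) * (n - 2) + r * (r - 1) := by
      rw [sum_ite, sum_const, sum_const, smul_eq_mul, smul_eq_mul, hcard]
      congr 2
      omega

theorem two_mul_card_edgeFinset_le_of_tnStarFree {r : ℕ} (hfree : ¬ContainsCopy G (TnStar n))
    (hV : Fintype.card V = n - 1 + r) (hr : 2 ≤ r) (hrn : r + 4 ≤ n)
    (hu : n - 2 ≤ G.degree u) :
    2 * #G.edgeFinset ≤ (n - 1) * (n - 2) + r * (r - 1) := by
  rw [← sum_degrees_eq_twice_card_edges]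
  rcases hu.lt_or_eq with hu | hu
  · exact sum_degrees_le_of_lt_degree hfree hV hr hrn hu
  · exact sum_degrees_le_of_degree_eq hfree hV hr (by omega) hu.symm

/-- The centre of a copy of `T_n^*` in a graph of maximum degree `n - 3` has no neighbours besides
its leaves, so the last two vertices of the copy are adjacent non-neighbours of it. -/
theorem not_containsCopy_tnStar_of_degree_le (hn : 4 ≤ n) (hΔ : ∀ v, G.degree v ≤ n - 3)
    (hind : ∀ u y z, G.degree u = n - 3 → y ≠ u → z ≠ u → ¬G.Adj u y →
      ¬G.Adj u z → ¬G.Adj y z) :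
    ¬ContainsCopy G (TnStar n) := by
  intro h
  obtain ⟨u, x, y, z, hux, hxy, hyz, huy, huz, hxz, hcard⟩ :=
    exists_path_of_containsCopy_tnStar hn h
  have hsplit := card_sdiff_add_card_inter (G.neighborFinset u) {x, y, z}
  rw [card_neighborFinset_eq_degree] at hsplit
  have hu := hΔ u
  have hnot : ∀ w ∈ ({y, z} : Finset V), w ≠ x → ¬G.Adj u w := fun w hw hwx huw => by
    have : ({x, w} : Finset V) ⊆ G.neighborFinset u ∩ {x, y, z} := by
      simp only [mem_insert, mem_singleton] at hw
      rcases hw with rfl | rfl <;> simp [insert_subset_iff, hux, huw]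
    have := card_le_card this
    rw [card_pair hwx.symm] at this
    omega
  have hx : 1 ≤ #(G.neighborFinset u ∩ {x, y, z}) := card_pos.2 ⟨x, by simp [hux]⟩
  exact hind u y z (by omega) huy.symm huz.symm (hnot y (by simp) hxy.ne')
    (hnot z (by simp) hxz.symm) hyz

variable {β : Type*}

def edgelessJoin (α : Type*) (H : SimpleGraph β) : SimpleGraph (α ⊕ β) where
  Adj
    | .inl _, .inl _ => False
    | .inl _, .inr _ => True
    | .inr _, .inl _ => True
    | .inr b, .inr b' => H.Adj b b'
  symm := ⟨by rintro (a | a) (b | b) h <;> first | trivial | exact h.symm⟩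
  loopless := ⟨by rintro (a | a) h; exacts [h, H.irrefl h]⟩

variable {α : Type*} {H : SimpleGraph β}

@[simp] theorem edgelessJoin_adj_inl_inl {a a' : α} :
    ¬(edgelessJoin α H).Adj (.inl a) (.inl a') :=
  id

@[simp] theorem edgelessJoin_adj_inl_inr {a : α} {b : β} :
    (edgelessJoin α H).Adj (.inl a) (.inr b) :=
  trivial

@[simp] theorem edgelessJoin_adj_inr_inl {a : α} {b : β} :
    (edgelessJoin α H).Adj (.inr b) (.inl a) :=
  trivial

@[simp] theorem edgelessJoin_adj_inr_inr {b b' : β} :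
    (edgelessJoin α H).Adj (.inr b) (.inr b') ↔ H.Adj b b' :=
  Iff.rfl

instance [DecidableRel H.Adj] : DecidableRel (edgelessJoin α H).Adj
  | .inl _, .inl _ => isFalse id
  | .inl _, .inr _ => isTrue trivial
  | .inr _, .inl _ => isTrue trivial
  | .inr b, .inr b' => inferInstanceAs (Decidable (H.Adj b b'))

variable [Fintype α] [Fintype β] [DecidableRel H.Adj]

theorem edgelessJoin_degree_inl (a : α) :
    (edgelessJoin α H).degree (.inl a) = Fintype.card β := by
  rw [← card_neighborFinset_eq_degree,
    show (edgelessJoin α H).neighborFinset (.inl a) = (∅ : Finset α).disjSum univ by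
      ext (_ | _) <;> simp]
  simp

theorem edgelessJoin_degree_inr (b : β) :
    (edgelessJoin α H).degree (.inr b) = Fintype.card α + H.degree b := by
  rw [← card_neighborFinset_eq_degree,
    show (edgelessJoin α H).neighborFinset (.inr b) = univ.disjSum (H.neighborFinset b) by
      ext (_ | _) <;> simp]
  simp

theorem card_edgeFinset_edgelessJoin :
    #(edgelessJoin α H).edgeFinset = Fintype.card α * Fintype.card β + #H.edgeFinset := by
  have := sum_degrees_eq_twice_card_edges (edgelessJoin α H)
  rw [Fintype.sum_sum_type] at this
  simp only [edgelessJoin_degree_inl, edgelessJoin_degree_inr, sum_add_distrib, sum_const,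
    card_univ, smul_eq_mul, sum_degrees_eq_twice_card_edges] at this
  linarith

theorem edgelessJoin_not_containsCopy_tnStar [DecidableEq α] [DecidableEq β]
    (hn : 4 ≤ n) (hα : Fintype.card α ≤ n - 3) (hβ : Fintype.card β = n - 3)
    (hH : (∀ b, H.degree b = 0) ∨ ∀ b, Fintype.card α + H.degree b ≤ n - 4) :
    ¬ContainsCopy (edgelessJoin α H) (TnStar n) := by
  refine not_containsCopy_tnStar_of_degree_le hn ?_ ?_
  · rintro (a | b)
    · simp [edgelessJoin_degree_inl, hβ]
    · rw [edgelessJoin_degree_inr]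
      rcases hH with hH | hH
      · simpa [hH b] using hα
      · exact (hH b).trans (by omega)
  · rintro (a | b) (y | y) (z | z) hdeg - - huy huz hyz <;> simp_all [edgelessJoin_degree_inr]
    rcases hH with hH | hH
    · exact ((H.degree_pos_iff_exists_adj y).2 ⟨z, hyz⟩).ne' (hH y)
    · have := hH b
      omega

theorem neighborFinset_circulantGraph {Γ : Type*} [AddGroup Γ] [Fintype Γ] [DecidableEq Γ]
    {s : Finset Γ} (hs : -s = s) (h0 : (0 : Γ) ∉ s) (v : Γ) :
    (circulantGraph (s : Set Γ)).neighborFinset v = s.map (addRightEmbedding v) := by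
  ext w
  have hneg : v - w ∈ s ↔ w - v ∈ s := by
    rw [← neg_sub, ← mem_neg', hs]
  simp only [mem_neighborFinset, circulantGraph_adj, mem_coe, hneg, or_self, mem_map,
    addRightEmbedding_apply, ← eq_sub_iff_add_eq, exists_eq_right, and_iff_right_iff_imp]
  rintro h rfl
  simp_all

theorem degree_circulantGraph {Γ : Type*} [AddGroup Γ] [Fintype Γ] [DecidableEq Γ]
    {s : Finset Γ} (hs : -s = s) (h0 : (0 : Γ) ∉ s) (v : Γ) :
    (circulantGraph (s : Set Γ)).degree v = #s := by
  rw [← card_neighborFinset_eq_degree, neighborFinset_circulantGraph hs h0, card_map]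

theorem exists_symmetric_jumps {q k : ℕ} [NeZero q] (hk : 2 * k < q) :
    ∃ s : Finset (Fin q), -s = s ∧ 0 ∉ s ∧ #s = 2 * k ∧
      ∀ j ∈ s, j.val ≤ k ∨ q ≤ j.val + k := by
  set A := (Icc 1 k).attachFin (n := q) (fun m hm => by simp only [mem_Icc] at hm; omega)
  have hA : ∀ j : Fin q, j ∈ A ↔ 1 ≤ j.val ∧ j.val ≤ k := by simp [A]
  have hnegA : ∀ j : Fin q, j ∈ -A ↔ j.val ≠ 0 ∧ q ≤ j.val + k := fun j => by
    have := j.2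
    rw [mem_neg', hA, Fin.val_neg]
    split_ifs with h
    · simp [h]
    · have : j.val ≠ 0 := Fin.val_ne_iff.2 h
      omega
  refine ⟨A ∪ -A, ?_, by simp [hA, hnegA], ?_, fun j hj => ?_⟩
  · ext j
    rw [mem_neg', mem_union, mem_union, mem_neg', mem_neg', neg_neg, or_comm]
  · rw [card_union_of_disjoint, card_neg, card_attachFin, Nat.card_Icc]
    · omega
    · exact Finset.disjoint_left.2 fun j h₁ h₂ => by rw [hA] at h₁; rw [hnegA] at h₂; omega
  · rw [mem_union, hA, hnegA] at hj
    omega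

/-- Covers every vertex except `q - 1` when `q` is odd. -/
def halfMatching (q : ℕ) : SimpleGraph (Fin q) :=
  fromRel fun a b => a.val < q / 2 ∧ b.val = a.val + q / 2

theorem halfMatching_adj {q : ℕ} {a b : Fin q} : (halfMatching q).Adj a b ↔
    a.val < q / 2 ∧ b.val = a.val + q / 2 ∨ b.val < q / 2 ∧ a.val = b.val + q / 2 := by
  simp only [halfMatching, fromRel_adj, ne_eq, Fin.ext_iff, and_iff_right_iff_imp]
  omega

instance {q : ℕ} : DecidableRel (halfMatching q).Adj :=
  fun _ _ => decidable_of_iff' _ halfMatching_adj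

theorem degree_halfMatching_le {q : ℕ} (v : Fin q) : (halfMatching q).degree v ≤ 1 := by
  rw [← card_neighborFinset_eq_degree, card_le_one]
  intro a ha b hb
  simp only [mem_neighborFinset, halfMatching_adj] at ha hb
  exact Fin.ext (by omega)

theorem exists_halfMatching_adj {q : ℕ} {v : Fin q} (hv : v.val + 1 < q) :
    ∃ w, (halfMatching q).Adj v w := by
  by_cases h : v.val < q / 2
  · exact ⟨⟨v.val + q / 2, by omega⟩, halfMatching_adj.2 (Or.inl ⟨h, rfl⟩)⟩
  · exact ⟨⟨v.val - q / 2, by omega⟩,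
      halfMatching_adj.2 (Or.inr ⟨by simp; omega, by simp; omega⟩)⟩

section CirculantSupHalfMatching

variable {q k : ℕ} [NeZero q] {s : Finset (Fin q)} (hs : -s = s) (h0 : 0 ∉ s)
  (hcard : #s = 2 * k)
include hs h0 hcard

theorem degree_circulantGraph_sup_halfMatching_le (v : Fin q) :
    (circulantGraph (s : Set (Fin q)) ⊔ halfMatching q).degree v ≤ 2 * k + 1 := by
  rw [← card_neighborFinset_eq_degree, neighborFinset_sup]
  refine (card_union_le _ _).trans ?_
  rw [card_neighborFinset_eq_degree, card_neighborFinset_eq_degree, degree_circulantGraph hs h0,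
    hcard]
  have := degree_halfMatching_le v
  omega

/-- The partner of `v` lies at cyclic distance `⌊q/2⌋ > k`, so it is not a circulant neighbour. -/
theorem le_degree_circulantGraph_sup_halfMatching
    (hjump : ∀ j ∈ s, j.val ≤ k ∨ q ≤ j.val + k) (hk : 2 * k + 1 < q) {v : Fin q}
    (hv : v.val + 1 < q) :
    2 * k + 1 ≤ (circulantGraph (s : Set (Fin q)) ⊔ halfMatching q).degree v := by
  obtain ⟨w, hvw⟩ := exists_halfMatching_adj hv
  have hwC : w ∉ (circulantGraph (s : Set (Fin q))).neighborFinset v := by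
    rw [neighborFinset_circulantGraph hs h0, mem_map]
    rintro ⟨j, hj, hjw⟩
    obtain rfl : j = w - v := eq_sub_of_add_eq hjw
    have := hjump _ hj
    rcases halfMatching_adj.1 hvw with h | h
    · rw [Fin.coe_sub_iff_le.2 (Fin.le_def.2 (by omega))] at this
      omega
    · rw [Fin.coe_sub_iff_lt.2 (Fin.lt_def.2 (by omega))] at this
      omega
  rw [← card_neighborFinset_eq_degree, neighborFinset_sup]
  calc 2 * k + 1 = #(insert w ((circulantGraph (s : Set (Fin q))).neighborFinset v)) := by
        rw [card_insert_of_notMem hwC, card_neighborFinset_eq_degree, degree_circulantGraph hs h0,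
          hcard]
    _ ≤ _ := card_le_card (insert_subset (mem_union_right _ (by simpa using hvw))
        subset_union_left)

end CirculantSupHalfMatching

/-- A `d`-regular circulant when `d` is even, and a circulant of degree `d - 1` plus
`halfMatching` when `d` is odd. -/
theorem exists_almost_regular {q d : ℕ} (hd : d < q) :
    ∃ H : SimpleGraph (Fin q), ∃ _ : DecidableRel H.Adj,
      (∀ v, H.degree v ≤ d) ∧ q * d ≤ 2 * #H.edgeFinset + 1 := by
  have : NeZero q := ⟨by omega⟩
  obtain ⟨k, rfl | rfl⟩ := Nat.even_or_odd' d
  · obtain ⟨s, hs, h0, hcard, -⟩ := exists_symmetric_jumps (q := q) (k := k) (by omega)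
    refine ⟨circulantGraph (s : Set (Fin q)), inferInstance,
      fun v => (degree_circulantGraph hs h0 v).trans_le hcard.le, ?_⟩
    rw [← sum_degrees_eq_twice_card_edges]
    simp [degree_circulantGraph hs h0, hcard, mul_comm]
  obtain ⟨s, hs, h0, hcard, hjump⟩ := exists_symmetric_jumps (q := q) (k := k) (by omega)
  set H := circulantGraph (s : Set (Fin q)) ⊔ halfMatching q
  let last : Fin q := ⟨q - 1, by omega⟩
  have hge : ∀ v, 2 * k + 1 ≤ H.degree v + if v = last then 1 else 0 := fun v => by
    split_ifs with hv
    · rw [← card_neighborFinset_eq_degree, neighborFinset_sup]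
      have := card_le_card (subset_union_left
        (s₁ := (circulantGraph (s : Set (Fin q))).neighborFinset v)
        (s₂ := (halfMatching q).neighborFinset v))
      rw [card_neighborFinset_eq_degree, degree_circulantGraph hs h0, hcard] at this
      omega
    · have hvq : v.val ≠ q - 1 := fun h => hv (Fin.ext h)
      have := v.2
      exact le_degree_circulantGraph_sup_halfMatching hs h0 hcard hjump hd (v := v) (by omega)
  refine ⟨H, inferInstance, degree_circulantGraph_sup_halfMatching_le hs h0 hcard, ?_⟩
  rw [← sum_degrees_eq_twice_card_edges]
  calc q * (2 * k + 1) = ∑ _v : Fin q, (2 * k + 1) := by simp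
    _ ≤ ∑ v, (H.degree v + if v = last then 1 else 0) := sum_le_sum fun v _ => hge v
    _ = _ := by simp [sum_add_distrib]

end SimpleGraph

section Extremal

variable {W W₁ W₂ : Type*}

theorem bddAbove_card_edgeSet_of_free (p : ℕ) (H : SimpleGraph W) :
    BddAbove {m | ∃ G : SimpleGraph (Fin p), ¬ContainsCopy G H ∧ Nat.card G.edgeSet = m} :=
  ⟨Nat.card (Sym2 (Fin p)), by
    rintro _ ⟨G, -, rfl⟩
    exact Nat.card_le_card_of_injective _ Subtype.val_injective⟩

theorem exNum2_le_exNum (p : ℕ) (H₁ : SimpleGraph W₁) (H₂ : SimpleGraph W₂) :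
    exNum2 p H₁ H₂ ≤ exNum p H₂ :=
  csSup_le_csSup' (bddAbove_card_edgeSet_of_free p H₂) fun _ ⟨G, _, hG, hm⟩ => ⟨G, hG, hm⟩

theorem card_edgeSet_le_exNum2 {V : Type*} [Fintype V] {p : ℕ} (hV : Fintype.card V = p)
    {H₁ : SimpleGraph W₁} {H₂ : SimpleGraph W₂} {G : SimpleGraph V}
    (h₁ : ¬ContainsCopy G H₁) (h₂ : ¬ContainsCopy G H₂) :
    Nat.card G.edgeSet ≤ exNum2 p H₁ H₂ := by
  let e := Iso.map (Fintype.equivFinOfCardEq hV) G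
  rw [containsCopy_congr e] at h₁ h₂
  rw [Nat.card_congr e.mapEdgeSet]
  refine le_csSup ((bddAbove_card_edgeSet_of_free p H₂).mono ?_) ⟨_, h₁, h₂, rfl⟩
  rintro _ ⟨G, -, hG, hm⟩
  exact ⟨G, hG, hm⟩

end Extremal

theorem exists_free_edgelessJoin {n r : ℕ} (hrn : r + 5 ≤ n) :
    ∃ J : SimpleGraph (Fin (r + 2) ⊕ Fin (n - 3)), ∃ _ : DecidableRel J.Adj,
      ¬ContainsCopy J (completeBipartiteGraph (Fin 1) (Fin (n - 2))) ∧
      ¬ContainsCopy J (TnStar n) ∧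
      2 * ((r + 2) * (n - 3)) + (n - 3) * (n - r - 6) ≤ 2 * #J.edgeFinset + 1 := by
  obtain ⟨H, _, hdeg, hedges⟩ := exists_almost_regular (q := n - 3) (d := n - r - 6) (by omega)
  have hJ : ∀ v, (edgelessJoin (Fin (r + 2)) H).degree v ≤ n - 3 := by
    rintro (a | b)
    · simp [edgelessJoin_degree_inl]
    · have := hdeg b
      simp only [edgelessJoin_degree_inr, Fintype.card_fin]
      omega
  refine ⟨edgelessJoin (Fin (r + 2)) H, inferInstance, fun h => ?_, ?_, ?_⟩
  · obtain ⟨v, hv⟩ := (containsCopy_star_iff _).1 h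
    have := hJ v
    omega
  · refine edgelessJoin_not_containsCopy_tnStar (by omega) (by simp; omega) (by simp) ?_
    rcases Nat.eq_zero_or_pos (n - r - 6) with h | h
    · exact .inl fun b => by have := hdeg b; omega
    · exact .inr fun b => by have := hdeg b; simp; omega
  · rw [card_edgeFinset_edgelessJoin, Fintype.card_fin, Fintype.card_fin]
    omega

theorem le_two_mul_exNum2 {n r : ℕ} (hn : 11 ≤ n) (hr : 3 ≤ r) (hrn : r + 5 ≤ n) :
    (n - 1) * (n - 2) + r * (r - 1) ≤
      2 * exNum2 (n - 1 + r) (completeBipartiteGraph (Fin 1) (Fin (n - 2))) (TnStar n) := by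
  obtain ⟨J, _, hstar, htn, hedges⟩ := exists_free_edgelessJoin hrn
  have hJ := card_edgeSet_le_exNum2
    (show Fintype.card (Fin (r + 2) ⊕ Fin (n - 3)) = n - 1 + r by simp; omega) hstar htn
  rw [Nat.card_eq_fintype_card, ← edgeFinset_card] at hJ
  have harith :
      (n - 1) * (n - 2) + r * (r - 1) ≤ 2 * ((r + 2) * (n - 3)) + (n - 3) * (n - r - 6) := by
    obtain ⟨a, rfl⟩ := Nat.exists_eq_add_of_le hrn
    obtain ⟨b, rfl⟩ := Nat.exists_eq_add_of_le hr
    simp only [show 3 + b + 5 + a - 1 = b + a + 7 by omega,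
      show 3 + b + 5 + a - 2 = b + a + 6 by omega, show 3 + b + 5 + a - 3 = b + a + 5 by omega,
      show 3 + b - 1 = b + 2 by omega, show 3 + b + 5 + a - (3 + b) - 6 = a - 1 by omega]
    rcases a with _ | a
    · nlinarith
    · simp only [Nat.add_sub_cancel]
      nlinarith
  -- the left-hand side is even, which absorbs the `+ 1` in `hedges`
  obtain ⟨t, ht⟩ : Even ((n - 1) * (n - 2) + r * (r - 1)) := by
    have := Nat.even_mul_pred_self (n - 1)
    rw [show n - 1 - 1 = n - 2 by omega] at this
    exact this.add (Nat.even_mul_pred_self r)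
  omega

theorem stmt15 (n r : ℕ) (hn : 11 ≤ n) (hr1 : 3 ≤ r) (hr2 : r ≤ n - 5) :
    exNum (n - 1 + r) (TnStar n) =
      exNum2 (n - 1 + r) (completeBipartiteGraph (Fin 1) (Fin (n - 2))) (TnStar n) := by
  refine le_antisymm (csSup_le' ?_) (exNum2_le_exNum _ _ _)
  rintro _ ⟨G, hG, rfl⟩
  classical
  by_cases hstar : ContainsCopy G (completeBipartiteGraph (Fin 1) (Fin (n - 2)))
  · obtain ⟨u, hu⟩ := (containsCopy_star_iff _).1 hstar
    have hup := two_mul_card_edgeFinset_le_of_tnStarFree hG (Fintype.card_fin _) (by omega)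
      (by omega) hu
    have hlow := le_two_mul_exNum2 hn hr1 (by omega)
    rw [Nat.card_eq_fintype_card, ← edgeFinset_card]
    omega
  · exact card_edgeSet_le_exNum2 (Fintype.card_fin _) hstar hG
end

section
/- Let p ≥ n with n ∈ {6,7} and let r ∈ {0,…,n−2} satisfy p ≡ r (mod n−1). Then ex(p;T_n*) = ((n−2)p − r(n−1−r))/2. -/
/-
Lower bound: `⌊p/(n-1)⌋` disjoint copies of `K_{n-1}` and one `K_{p mod (n-1)}` contain no
connected graph on `n` vertices, and have `packingDegSum (n-1) p / 2` edges.

Upper bound: by strong induction on a vertex set `s` of a `T_n*`-free graph, the degree sum inside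
`s` is at most `packingDegSum (n-1) |s|`. This bound is superadditive, so `s` may be assumed
connected with `|s| ≥ n`. If every degree is at most `n-3` we are done. Otherwise let `c` have
degree at least `n-2` and neighbourhood `A`. A path `x-y-z` from `x ∈ A` avoiding `c`, together
with `c` and `n-4` further vertices of `A`, is a copy of `T_n*`; hence every vertex outside
`{c} ∪ A` is a pendant vertex hanging on `A`, and the degree sum is at most `2(|s|-1)` plus the
degree sum inside `A`. If `|A| ≥ n-1`, then `A` induces a matching; if `|A| = n-2`, a vertex of
`A` carrying a pendant vertex is isolated in `A`. For `n ∈ {6,7}` each resulting bound is at most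
`packingDegSum (n-1) |s|`, by a check over the residues modulo `n-1`.
-/

open SimpleGraph Finset

def packingDegSum (k p : ℕ) : ℕ := k * (k - 1) * (p / k) + p % k * (p % k - 1)

lemma exists_eq_mul_add_of_pos {k : ℕ} (hk : 0 < k) (p : ℕ) : ∃ q r, r < k ∧ p = k * q + r :=
  ⟨p / k, p % k, Nat.mod_lt p hk, (Nat.div_add_mod p k).symm⟩

lemma packingDegSum_mul_add {k r : ℕ} (q : ℕ) (hr : r < k) :
    packingDegSum k (k * q + r) = k * (k - 1) * q + r * (r - 1) := by
  have hk : 0 < k := by omega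
  rw [packingDegSum, Nat.mul_add_div hk, Nat.div_eq_of_lt hr, Nat.mul_add_mod, Nat.mod_eq_of_lt hr,
    add_zero]

lemma packingDegSum_of_le {k p : ℕ} (h : p ≤ k) : packingDegSum k p = p * (p - 1) := by
  rcases h.lt_or_eq with h | rfl
  · simpa using packingDegSum_mul_add 0 h
  · rcases Nat.eq_zero_or_pos p with rfl | hp
    · rfl
    · simp [packingDegSum, Nat.mod_self, Nat.div_self hp]

lemma cast_mul_pred (r : ℕ) : ((r * (r - 1) : ℕ) : ℤ) = r * r - r := by
  rcases r with _ | r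
  · rfl
  · push_cast [Nat.add_sub_cancel]; ring

lemma mul_pred_add_mul_pred_le (a b : ℕ) : a * (a - 1) + b * (b - 1) ≤ (a + b) * (a + b - 1) := by
  zify [cast_mul_pred]
  nlinarith [Int.natCast_nonneg a, Int.natCast_nonneg b]

lemma packingDegSum_add_le (k a b : ℕ) :
    packingDegSum k a + packingDegSum k b ≤ packingDegSum k (a + b) := by
  rcases Nat.eq_zero_or_pos k with rfl | hk
  · simpa [packingDegSum] using mul_pred_add_mul_pred_le a b
  obtain ⟨q₁, r₁, hr₁, rfl⟩ := exists_eq_mul_add_of_pos hk a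
  obtain ⟨q₂, r₂, hr₂, rfl⟩ := exists_eq_mul_add_of_pos hk b
  rw [packingDegSum_mul_add q₁ hr₁, packingDegSum_mul_add q₂ hr₂]
  rcases lt_or_ge (r₁ + r₂) k with h | h
  · rw [show k * q₁ + r₁ + (k * q₂ + r₂) = k * (q₁ + q₂) + (r₁ + r₂) by ring,
      packingDegSum_mul_add _ h]
    nlinarith [mul_pred_add_mul_pred_le r₁ r₂]
  · obtain ⟨s, hs⟩ : ∃ s, r₁ + r₂ = k + s := ⟨r₁ + r₂ - k, by omega⟩
    rw [show k * q₁ + r₁ + (k * q₂ + r₂) = k * (q₁ + q₂ + 1) + s by linarith,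
      packingDegSum_mul_add _ (by omega : s < k)]
    -- trading `r₁, r₂` for `k, s` (same sum) raises `∑ r (r - 1)` by `2 (k - r₁) (k - r₂)`
    zify [cast_mul_pred, hk] at hs ⊢
    have h₁ : (r₁ : ℤ) ≤ k := by exact_mod_cast hr₁.le
    have h₂ : (r₂ : ℤ) ≤ k := by exact_mod_cast hr₂.le
    nlinarith [mul_nonneg (sub_nonneg.2 h₁) (sub_nonneg.2 h₂)]

lemma packingDegSum_eq_sub {k : ℕ} (hk : 0 < k) (p : ℕ) :
    packingDegSum k p = (k - 1) * p - p % k * (k - p % k) := by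
  obtain ⟨q, r, hr, rfl⟩ := exists_eq_mul_add_of_pos hk p
  rw [packingDegSum_mul_add q hr, Nat.mul_add_mod, Nat.mod_eq_of_lt hr]
  refine (Nat.sub_eq_of_eq_add ?_).symm
  zify [cast_mul_pred, hk, hr.le]
  ring

lemma mul_le_packingDegSum {n p : ℕ} (hn : n = 6 ∨ n = 7) (hp : n ≤ p) :
    (n - 3) * p ≤ packingDegSum (n - 1) p := by
  obtain ⟨q, r, hr, rfl⟩ := exists_eq_mul_add_of_pos (by omega : 0 < n - 1) p
  rw [packingDegSum_mul_add q hr]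
  rcases hn with rfl | rfl <;> interval_cases r <;> omega

lemma two_mul_pred_add_le_packingDegSum {n p : ℕ} (hn : n = 6 ∨ n = 7) (hp : n ≤ p) :
    2 * (p - 1) + (n - 3) * (n - 4) ≤ packingDegSum (n - 1) p := by
  obtain ⟨q, r, hr, rfl⟩ := exists_eq_mul_add_of_pos (by omega : 0 < n - 1) p
  rw [packingDegSum_mul_add q hr]
  rcases hn with rfl | rfl <;> interval_cases r <;> omega

lemma three_mul_pred_le_packingDegSum {n p : ℕ} (hn : n = 6 ∨ n = 7) (hp : n ≤ p) :
    3 * (p - 1) ≤ packingDegSum (n - 1) p := by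
  obtain ⟨q, r, hr, rfl⟩ := exists_eq_mul_add_of_pos (by omega : 0 < n - 1) p
  rw [packingDegSum_mul_add q hr]
  rcases hn with rfl | rfl <;> interval_cases r <;> omega

namespace SimpleGraph

variable {V : Type*} (G : SimpleGraph V)

def ConnectedOn (s : Finset V) : Prop :=
  ∀ t ⊆ s, t.Nonempty → (∀ a ∈ t, ∀ b ∈ s, G.Adj a b → b ∈ t) → t = s

variable [DecidableRel G.Adj]

def degIn (s : Finset V) (v : V) : ℕ := #{w ∈ s | G.Adj v w}

def degSumIn (s : Finset V) : ℕ := ∑ v ∈ s, G.degIn s v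

lemma degIn_le_card_sub_one {s : Finset V} {v : V} (hv : v ∈ s) : G.degIn s v ≤ #s - 1 := by
  classical
  rw [← card_erase_of_mem hv]
  exact card_le_card fun w hw => by
    rw [mem_filter] at hw
    exact mem_erase.2 ⟨(G.ne_of_adj hw.2).symm, hw.1⟩

lemma degIn_union [DecidableEq V] {s t : Finset V} (h : Disjoint s t) (v : V) :
    G.degIn (s ∪ t) v = G.degIn s v + G.degIn t v := by
  rw [degIn, filter_union, card_union_of_disjoint (disjoint_filter_filter h)]
  rfl

lemma sum_degIn_comm (s t : Finset V) : ∑ v ∈ s, G.degIn t v = ∑ v ∈ t, G.degIn s v := by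
  simp only [degIn, card_filter]
  rw [sum_comm]
  simp only [G.adj_comm]

lemma degSumIn_le_mul {s : Finset V} {d : ℕ} (h : ∀ v ∈ s, G.degIn s v ≤ d) :
    G.degSumIn s ≤ d * #s := by
  simpa [degSumIn, mul_comm] using sum_le_card_nsmul s _ d h

lemma degSumIn_le_card_mul (s : Finset V) : G.degSumIn s ≤ #s * (#s - 1) :=
  (G.degSumIn_le_mul fun _ => G.degIn_le_card_sub_one).trans_eq (mul_comm _ _)

lemma degSumIn_union [DecidableEq V] {s t : Finset V} (h : Disjoint s t) :
    G.degSumIn (s ∪ t) = G.degSumIn s + G.degSumIn t + 2 * ∑ v ∈ s, G.degIn t v := by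
  rw [degSumIn, sum_union h]
  simp only [G.degIn_union h, sum_add_distrib]
  rw [G.sum_degIn_comm t s, degSumIn, degSumIn]
  ring

lemma degSumIn_eq_add_of_closed [DecidableEq V] {s t : Finset V} (hts : t ⊆ s)
    (hclosed : ∀ a ∈ t, ∀ b ∈ s, G.Adj a b → b ∈ t) :
    G.degSumIn s = G.degSumIn t + G.degSumIn (s \ t) := by
  have hcross : ∑ v ∈ t, G.degIn (s \ t) v = 0 := sum_eq_zero fun v hv =>
    card_eq_zero.2 <| filter_eq_empty_iff.2 fun w hw hvw =>
      (mem_sdiff.1 hw).2 (hclosed v hv w (mem_sdiff.1 hw).1 hvw)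
  have hsum := G.degSumIn_union (disjoint_sdiff : Disjoint t (s \ t))
  rwa [union_sdiff_of_subset hts, hcross, mul_zero, add_zero] at hsum

lemma degSumIn_insert [DecidableEq V] {s : Finset V} {v : V} (hv : v ∉ s) :
    G.degSumIn (insert v s) = G.degSumIn s + 2 * G.degIn s v := by
  rw [insert_eq, G.degSumIn_union (disjoint_singleton_left.2 hv)]
  simp [degSumIn, degIn]

lemma degSumIn_le_of_degIn_le_one [DecidableEq V] {s t : Finset V} (hts : t ⊆ s)
    (h : ∀ v ∈ s \ t, G.degIn s v ≤ 1) : G.degSumIn s ≤ G.degSumIn t + 2 * #(s \ t) := by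
  have hsum : G.degSumIn (s \ t) + ∑ v ∈ s \ t, G.degIn t v ≤ #(s \ t) := by
    rw [degSumIn, ← sum_add_distrib]
    simpa [← G.degIn_union disjoint_sdiff_self_left, sdiff_union_of_subset hts]
      using sum_le_card_nsmul _ _ 1 h
  have hsplit := G.degSumIn_union (disjoint_sdiff : Disjoint t (s \ t))
  rw [union_sdiff_of_subset hts, G.sum_degIn_comm] at hsplit
  omega

lemma degSumIn_univ [Fintype V] : G.degSumIn univ = 2 * #G.edgeFinset := by
  rw [← sum_degrees_eq_twice_card_edges]
  simp [degSumIn, degIn, ← card_neighborFinset_eq_degree, neighborFinset_eq_filter]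

lemma two_mul_card_edgeSet [Fintype V] : 2 * Nat.card G.edgeSet = G.degSumIn univ := by
  rw [degSumIn_univ, Nat.card_eq_fintype_card, edgeFinset_card]

end SimpleGraph

lemma containsCopy_tnStar {V : Type*} {G : SimpleGraph V} {n : ℕ} (hn : 4 ≤ n) {c x y z : V}
    {L : Finset V} (hL : n - 4 ≤ #L) (hcL : ∀ l ∈ L, G.Adj c l)
    (hxL : x ∉ L) (hyL : y ∉ L) (hzL : z ∉ L)
    (hcx : G.Adj c x) (hxy : G.Adj x y) (hyz : G.Adj y z) (hcy : c ≠ y) (hcz : c ≠ z)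
    (hxz : x ≠ z) : ContainsCopy G (TnStar n) := by
  let e : Fin (n - 4) ↪ V :=
    (Fin.castLEEmb hL).trans (L.equivFin.symm.toEmbedding.trans (Function.Embedding.subtype _))
  have he : ∀ i, e i ∈ L := fun i => (L.equivFin.symm _).2
  let f : Fin n → V := fun i =>
    if h₀ : i.val = 0 then c else if h : i.val ≤ n - 4 then e ⟨i.val - 1, by omega⟩
    else if i.val = n - 3 then x else if i.val = n - 2 then y else z
  have hce : ∀ i, c ≠ e i := fun i => G.ne_of_adj (hcL _ (he i))
  have hex : ∀ i, e i ≠ x := fun i h => hxL (h ▸ he i)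
  have hey : ∀ i, e i ≠ y := fun i h => hyL (h ▸ he i)
  have hez : ∀ i, e i ≠ z := fun i h => hzL (h ▸ he i)
  have hcx' := G.ne_of_adj hcx
  have hxy' := G.ne_of_adj hxy
  have hyz' := G.ne_of_adj hyz
  refine ⟨⟨f, fun i j hij => ?_⟩, ?_⟩
  · simp only [f] at hij
    split_ifs at hij <;> grind
  · have key : ∀ i j : Fin n, ((i.val = 0 ∧ 1 ≤ j.val ∧ j.val ≤ n - 3) ∨
        (i.val = n - 3 ∧ j.val = n - 2) ∨ (i.val = n - 2 ∧ j.val = n - 1)) → G.Adj (f i) (f j) := by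
      rintro i j (⟨hi, hj⟩ | ⟨hi, hj⟩ | ⟨hi, hj⟩) <;> simp only [f] <;> split_ifs <;>
        first | omega | assumption | exact hcL _ (he _)
    intro i j hij
    rw [TnStar, fromRel_adj] at hij
    rcases hij.2 with h | h
    · exact key i j h
    · exact (key j i h).symm

section TnStarFree

variable {n : ℕ} {V : Type*} [DecidableEq V] {G : SimpleGraph V}

lemma card_sdiff_lt_of_tnStarFree (hn : 4 ≤ n) (hfree : ¬ ContainsCopy G (TnStar n))
    {c x y z : V} {A : Finset V} (hA : ∀ a ∈ A, G.Adj c a) (hx : x ∈ A)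
    (hxy : G.Adj x y) (hyz : G.Adj y z) (hyc : y ≠ c) (hzc : z ≠ c) (hzx : z ≠ x) :
    #(A \ {x, y, z}) < n - 4 := by
  by_contra! h
  exact hfree (containsCopy_tnStar hn h (fun l hl => hA l (mem_sdiff.1 hl).1) (by simp) (by simp)
    (by simp) (hA x hx) hxy hyz hyc.symm hzc.symm hzx.symm)

lemma false_of_path_of_le_card (hn : 4 ≤ n) (hfree : ¬ ContainsCopy G (TnStar n))
    {c x y z : V} {A : Finset V} (hA : ∀ a ∈ A, G.Adj c a) (hcard : n - 1 ≤ #A) (hx : x ∈ A)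
    (hxy : G.Adj x y) (hyz : G.Adj y z) (hyc : y ≠ c) (hzc : z ≠ c) (hzx : z ≠ x) : False := by
  have := card_sdiff_lt_of_tnStarFree hn hfree hA hx hxy hyz hyc hzc hzx
  have := le_card_sdiff {x, y, z} A
  have : #({x, y, z} : Finset V) ≤ 3 := card_le_three
  omega

lemma mem_of_path_of_le_card (hn : 4 ≤ n) (hfree : ¬ ContainsCopy G (TnStar n))
    {c x y z : V} {A : Finset V} (hA : ∀ a ∈ A, G.Adj c a) (hcard : n - 2 ≤ #A) (hx : x ∈ A)
    (hxy : G.Adj x y) (hyz : G.Adj y z) (hyc : y ≠ c) (hzc : z ≠ c) (hzx : z ≠ x) :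
    y ∈ A ∧ z ∈ A := by
  by_contra hyzA
  have hinter : #(A ∩ {x, y, z}) ≤ 2 := by
    rcases not_and_or.1 hyzA with hy | hz
    · refine (card_le_card fun a ha => ?_).trans (card_le_two (a := x) (b := z))
      simp only [mem_inter, mem_insert, mem_singleton] at ha ⊢
      rcases ha with ⟨ha, rfl | rfl | rfl⟩ <;> simp_all
    · refine (card_le_card fun a ha => ?_).trans (card_le_two (a := x) (b := y))
      simp only [mem_inter, mem_insert, mem_singleton] at ha ⊢
      rcases ha with ⟨ha, rfl | rfl | rfl⟩ <;> simp_all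
  have := card_sdiff_lt_of_tnStarFree hn hfree hA hx hxy hyz hyc hzc hzx
  have := card_sdiff_add_card_inter A {x, y, z}
  omega

variable [DecidableRel G.Adj]

lemma eq_of_adj_of_not_adj_center (hn : 4 ≤ n) (hfree : ¬ ContainsCopy G (TnStar n))
    {s : Finset V} {c x y z : V} (hdeg : n - 2 ≤ G.degIn s c) (hx : x ∈ s) (hcx : G.Adj c x)
    (hyc : y ≠ c) (hcy : ¬ G.Adj c y) (hxy : G.Adj x y) (hyz : G.Adj y z) : z = x := by
  by_contra hzx
  rcases eq_or_ne z c with rfl | hzc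
  · exact hcy hyz.symm
  · have hA : ∀ a ∈ {w ∈ s | G.Adj c w}, G.Adj c a := fun a ha => (mem_filter.1 ha).2
    exact hcy (hA y (mem_of_path_of_le_card hn hfree hA hdeg (mem_filter.2 ⟨hx, hcx⟩) hxy hyz
      hyc hzc hzx).1)

lemma exists_adj_adj_of_connectedOn (hn : 4 ≤ n) (hfree : ¬ ContainsCopy G (TnStar n))
    {s : Finset V} {c : V} (hc : c ∈ s) (hdeg : n - 2 ≤ G.degIn s c)
    (hconn : G.ConnectedOn s)
    {y : V} (hy : y ∈ s) (hyc : y ≠ c) (hcy : ¬ G.Adj c y) : ∃ x ∈ s, G.Adj c x ∧ G.Adj x y := by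
  set t := {v ∈ s | v = c ∨ G.Adj c v ∨ ∃ x ∈ s, G.Adj c x ∧ G.Adj x v}
  have hclosed : ∀ a ∈ t, ∀ b ∈ s, G.Adj a b → b ∈ t := by
    intro a ha b hb hab
    simp only [t, mem_filter] at ha ⊢
    refine ⟨hb, ?_⟩
    obtain ⟨has, rfl | hca | ⟨x, hxs, hcx, hxa⟩⟩ := ha
    · exact Or.inr (Or.inl hab)
    · exact Or.inr (Or.inr ⟨a, has, hca, hab⟩)
    · by_cases hac : a = c
      · exact Or.inr (Or.inl (hac ▸ hab))
      by_cases hca : G.Adj c a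
      · exact Or.inr (Or.inr ⟨a, has, hca, hab⟩)
      rw [eq_of_adj_of_not_adj_center hn hfree hdeg hxs hcx hac hca hxa hab]
      exact Or.inr (Or.inl hcx)
  have hy' : y ∈ t := hconn t (filter_subset _ _) ⟨c, by simp [t, hc]⟩ hclosed ▸ hy
  simp only [t, mem_filter] at hy'
  tauto

lemma degSumIn_le_of_le_degIn (hn : 4 ≤ n) (hfree : ¬ ContainsCopy G (TnStar n))
    {s : Finset V} {c : V} (hc : c ∈ s) (hdeg : n - 2 ≤ G.degIn s c)
    (hconn : G.ConnectedOn s) :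
    G.degSumIn s ≤ 2 * (#s - 1) + G.degSumIn {w ∈ s | G.Adj c w} := by
  set A := {w ∈ s | G.Adj c w}
  have hcA : c ∉ A := fun h => G.irrefl (mem_filter.1 h).2
  have hAs : insert c A ⊆ s := insert_subset hc (filter_subset _ _)
  have hpendant : ∀ y ∈ s \ insert c A, G.degIn s y ≤ 1 := by
    intro y hy
    simp only [A, mem_sdiff, mem_insert, mem_filter, not_or, not_and] at hy
    obtain ⟨hys, hyc, hcy⟩ := hy
    obtain ⟨x, hxs, hcx, hxy⟩ :=
      exists_adj_adj_of_connectedOn hn hfree hc hdeg hconn hys hyc (hcy hys)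
    refine card_le_one.2 fun a ha b hb => ?_
    rw [mem_filter] at ha hb
    rw [eq_of_adj_of_not_adj_center hn hfree hdeg hxs hcx hyc (hcy hys) hxy ha.2,
      eq_of_adj_of_not_adj_center hn hfree hdeg hxs hcx hyc (hcy hys) hxy hb.2]
  have hbound := G.degSumIn_le_of_degIn_le_one hAs hpendant
  have hdegA : G.degIn A c = #A := by
    rw [degIn, filter_true_of_mem fun a ha => (mem_filter.1 ha).2]
  rw [G.degSumIn_insert hcA, hdegA, card_sdiff_of_subset hAs, card_insert_of_notMem hcA] at hbound
  have hcard := card_le_card hAs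
  rw [card_insert_of_notMem hcA] at hcard
  omega

lemma degSumIn_le_of_lt_degIn (hn : 4 ≤ n) (hfree : ¬ ContainsCopy G (TnStar n))
    {s : Finset V} {c : V} (hc : c ∈ s) (hdeg : n - 1 ≤ G.degIn s c)
    (hconn : G.ConnectedOn s) :
    G.degSumIn s ≤ 3 * (#s - 1) := by
  have hbound := degSumIn_le_of_le_degIn hn hfree hc (by omega) hconn
  set A := {w ∈ s | G.Adj c w}
  have hA : ∀ a ∈ A, G.Adj c a := fun a ha => (mem_filter.1 ha).2
  have hmatching : ∀ x ∈ A, G.degIn A x ≤ 1 := fun x hx => card_le_one.2 fun a ha b hb => by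
    by_contra hab
    rw [mem_filter] at ha hb
    exact false_of_path_of_le_card hn hfree hA hdeg ha.1 ha.2.symm hb.2
      (G.ne_of_adj (hA x hx)).symm (G.ne_of_adj (hA b hb.1)).symm (Ne.symm hab)
  have hA_le := G.degSumIn_le_mul hmatching
  have hcard : #A ≤ #s - 1 := G.degIn_le_card_sub_one hc
  omega

lemma degSumIn_le_of_degIn_eq (hn : 4 ≤ n) (hfree : ¬ ContainsCopy G (TnStar n))
    {s : Finset V} {c : V} (hc : c ∈ s) (hdeg : G.degIn s c = n - 2) (hs : n ≤ #s)
    (hconn : G.ConnectedOn s) :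
    G.degSumIn s ≤ 2 * (#s - 1) + (n - 3) * (n - 4) := by
  have hbound := degSumIn_le_of_le_degIn hn hfree hc hdeg.ge hconn
  set A := {w ∈ s | G.Adj c w}
  have hA : ∀ a ∈ A, G.Adj c a := fun a ha => (mem_filter.1 ha).2
  have hcA : c ∉ A := fun h => G.irrefl (hA c h)
  have hAs : insert c A ⊆ s := insert_subset hc (filter_subset _ _)
  obtain ⟨y, hy⟩ : (s \ insert c A).Nonempty := by
    rw [← card_pos, card_sdiff_of_subset hAs, card_insert_of_notMem hcA]
    change 0 < #s - (G.degIn s c + 1)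
    omega
  simp only [A, mem_sdiff, mem_insert, mem_filter, not_or, not_and] at hy
  obtain ⟨hys, hyc, hcy⟩ := hy
  obtain ⟨x₀, hx₀s, hcx₀, hx₀y⟩ := exists_adj_adj_of_connectedOn hn hfree hc hdeg.ge hconn hys hyc
    (hcy hys)
  have hx₀A : x₀ ∈ A := mem_filter.2 ⟨hx₀s, hcx₀⟩
  -- a neighbour `w ∈ A` of `x₀` would give the path `w - x₀ - y` leaving `A`
  have hx₀_isolated : G.degIn (A.erase x₀) x₀ = 0 := by
    refine card_eq_zero.2 (filter_eq_empty_iff.2 fun w hw hadj => hcy hys ?_)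
    have hwA := mem_of_mem_erase hw
    exact hA y (mem_of_path_of_le_card hn hfree hA hdeg.ge hwA hadj.symm hx₀y
      (G.ne_of_adj hcx₀).symm hyc (fun h => hcy hys (h ▸ hA w hwA))).2
  have hsplit := G.degSumIn_insert (notMem_erase x₀ A)
  rw [insert_erase hx₀A, hx₀_isolated] at hsplit
  have hrest := G.degSumIn_le_card_mul (A.erase x₀)
  rw [card_erase_of_mem hx₀A] at hrest
  change #A = n - 2 at hdeg
  rw [hdeg, show n - 2 - 1 = n - 3 by omega, show n - 3 - 1 = n - 4 by omega] at hrest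
  omega

theorem degSumIn_le_packingDegSum (hn : n = 6 ∨ n = 7) (hfree : ¬ ContainsCopy G (TnStar n))
    (s : Finset V) : G.degSumIn s ≤ packingDegSum (n - 1) #s := by
  have hn4 : 4 ≤ n := by omega
  induction s using Finset.strongInduction with
  | H s ih =>
  by_cases hsmall : #s ≤ n - 1
  · exact (G.degSumIn_le_card_mul s).trans_eq (packingDegSum_of_le hsmall).symm
  have hs : n ≤ #s := by omega
  by_cases hconn : G.ConnectedOn s
  · by_cases hdeg : ∃ c ∈ s, n - 2 ≤ G.degIn s c
    · obtain ⟨c, hc, hdeg⟩ := hdeg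
      rcases hdeg.eq_or_lt with hdeg | hdeg
      · exact (degSumIn_le_of_degIn_eq hn4 hfree hc hdeg.symm hs hconn).trans
          (two_mul_pred_add_le_packingDegSum hn hs)
      · exact (degSumIn_le_of_lt_degIn hn4 hfree hc (by omega) hconn).trans
          (three_mul_pred_le_packingDegSum hn hs)
    · push Not at hdeg
      exact (G.degSumIn_le_mul fun v hv => Nat.le_sub_one_of_lt (hdeg v hv)).trans
        (mul_le_packingDegSum hn hs)
  · obtain ⟨t, hts, htne, hclosed, hne⟩ :
        ∃ t ⊆ s, t.Nonempty ∧ (∀ a ∈ t, ∀ b ∈ s, G.Adj a b → b ∈ t) ∧ t ≠ s := by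
      simpa [ConnectedOn] using hconn
    calc G.degSumIn s = G.degSumIn t + G.degSumIn (s \ t) :=
          G.degSumIn_eq_add_of_closed hts hclosed
      _ ≤ packingDegSum (n - 1) #t + packingDegSum (n - 1) #(s \ t) :=
        add_le_add (ih t (hts.ssubset_of_ne hne)) (ih _ (sdiff_ssubset hts htne))
      _ ≤ packingDegSum (n - 1) #s := by
        rw [← card_sdiff_add_card_eq_card hts, add_comm (#(s \ t))]
        exact packingDegSum_add_le _ _ _

end TnStarFree

def cliquePacking (k p : ℕ) : SimpleGraph (Fin p) where
  Adj u v := u ≠ v ∧ u.val / k = v.val / k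
  symm := ⟨fun _ _ h => ⟨h.1.symm, h.2.symm⟩⟩
  loopless := ⟨fun _ h => h.1 rfl⟩

lemma cliquePacking_adj {k p : ℕ} {u v : Fin p} :
    (cliquePacking k p).Adj u v ↔ u ≠ v ∧ u.val / k = v.val / k := Iff.rfl

instance (k p : ℕ) : DecidableRel (cliquePacking k p).Adj :=
  fun _ _ => decidable_of_iff' _ cliquePacking_adj

lemma not_containsCopy_cliquePacking {n : ℕ} (hn : 4 ≤ n) (p : ℕ) :
    ¬ ContainsCopy (cliquePacking (n - 1) p) (TnStar n) := by
  rintro ⟨f, hf⟩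
  let block : Fin n → ℕ := fun i => (f i).val / (n - 1)
  have hedge : ∀ i j : Fin n, ((i.val = 0 ∧ 1 ≤ j.val ∧ j.val ≤ n - 3) ∨
      (i.val = n - 3 ∧ j.val = n - 2) ∨ (i.val = n - 2 ∧ j.val = n - 1)) → block i = block j :=
    fun i j h => (cliquePacking_adj.1 (hf i j
      ((fromRel_adj _ i j).2 ⟨fun e => by subst e; omega, Or.inl h⟩))).2
  have hblock : ∀ i : Fin n, block i = block ⟨0, by omega⟩ := by
    intro i
    have h3 := hedge ⟨0, by omega⟩ ⟨n - 3, by omega⟩ (Or.inl ⟨rfl, by dsimp only; omega⟩)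
    have h2 := hedge ⟨n - 3, by omega⟩ ⟨n - 2, by omega⟩ (Or.inr (Or.inl ⟨rfl, rfl⟩))
    rcases Nat.lt_or_ge i.val (n - 2) with hi | hi
    · rcases Nat.eq_zero_or_pos i.val with hi0 | hi0
      · rw [show i = ⟨0, by omega⟩ from Fin.ext hi0]
      · exact (hedge ⟨0, by omega⟩ i (Or.inl ⟨rfl, hi0, by omega⟩)).symm
    rcases hi.eq_or_lt with hi | hi
    · rw [show i = ⟨n - 2, by omega⟩ from Fin.ext hi.symm, ← h2, ← h3]
    · have h1 := hedge ⟨n - 2, by omega⟩ i (Or.inr (Or.inr ⟨rfl, by omega⟩))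
      rw [← h1, ← h2, ← h3]
  have hinj : Function.Injective fun i : Fin n =>
      (⟨(f i).val % (n - 1), Nat.mod_lt _ (by omega)⟩ : Fin (n - 1)) := by
    intro i j hij
    apply f.injective
    have hmod : (f i).val % (n - 1) = (f j).val % (n - 1) := congrArg Fin.val hij
    have hdiv : (f i).val / (n - 1) = (f j).val / (n - 1) := (hblock i).trans (hblock j).symm
    exact Fin.ext (by rw [← Nat.div_add_mod (f i).val (n - 1), hmod, hdiv, Nat.div_add_mod])
  have := Fintype.card_le_of_injective _ hinj
  simp only [Fintype.card_fin] at this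
  omega

lemma card_filter_div_eq {k p : ℕ} (hk : 0 < k) (v : Fin p) :
    #{w : Fin p | w.val / k = v.val / k} = if v.val < p / k * k then k else p % k := by
  rw [card_filter, Fin.sum_univ_eq_sum_range (fun m => if m / k = v.val / k then 1 else 0),
    ← card_filter]
  set j := v.val / k
  have hblock : {m ∈ range p | m / k = j} = Ico (j * k) (min (j * k + k) p) := by
    ext m
    simp only [mem_filter, mem_range, mem_Ico, Nat.div_eq_iff hk]
    omega
  have hp := Nat.div_add_mod' p k
  have hv := v.isLt
  rw [hblock, Nat.card_Ico]
  split_ifs with h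
  · have hj : j + 1 ≤ p / k := (Nat.div_lt_iff_lt_mul hk).2 h
    have := Nat.mul_le_mul_right k hj
    rw [Nat.succ_mul] at this
    omega
  · have hj : j = p / k := le_antisymm (Nat.div_le_div_right hv.le)
      ((Nat.le_div_iff_mul_le hk).2 (not_lt.1 h))
    have := Nat.lt_div_mul_add (a := p) hk
    rw [hj]
    omega

lemma degIn_univ_cliquePacking {k p : ℕ} (hk : 0 < k) (v : Fin p) :
    (cliquePacking k p).degIn univ v = if v.val < p / k * k then k - 1 else p % k - 1 := by
  have hnbrs : ({w | (cliquePacking k p).Adj v w} : Finset (Fin p)) =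
      ({w : Fin p | w.val / k = v.val / k} : Finset (Fin p)).erase v := by
    ext w
    simp only [mem_filter, mem_erase, mem_univ, true_and, cliquePacking_adj]
    exact ⟨fun h => ⟨h.1.symm, h.2.symm⟩, fun h => ⟨h.1.symm, h.2.symm⟩⟩
  rw [degIn, hnbrs, card_erase_of_mem (by simp), card_filter_div_eq hk]
  split_ifs <;> rfl

lemma degSumIn_univ_cliquePacking {k : ℕ} (hk : 0 < k) (p : ℕ) :
    (cliquePacking k p).degSumIn univ = packingDegSum k p := by
  simp only [degSumIn, degIn_univ_cliquePacking hk]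
  rw [Fin.sum_univ_eq_sum_range (fun m => if m < p / k * k then k - 1 else p % k - 1),
    ← sum_range_add_sum_Ico _ (Nat.div_mul_le_self p k),
    sum_congr rfl fun m hm => if_pos (mem_range.1 hm),
    sum_congr rfl fun m hm => if_neg (not_lt.2 (mem_Ico.1 hm).1),
    sum_const, sum_const, card_range, Nat.card_Ico, smul_eq_mul, smul_eq_mul,
    show p - p / k * k = p % k by have := Nat.div_add_mod' p k; omega, packingDegSum]
  ring

theorem stmt19_general (p n r : ℕ) (hn : n = 6 ∨ n = 7)
    (hmod : p % (n - 1) = r) :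
    exNum p (TnStar n) = ((n - 2) * p - r * (n - 1 - r)) / 2 := by
  classical
  have hk : 0 < n - 1 := by omega
  have hformula := packingDegSum_eq_sub hk p
  rw [show n - 1 - 1 = n - 2 by omega, hmod] at hformula
  rw [← hformula]
  refine IsGreatest.csSup_eq ⟨⟨cliquePacking (n - 1) p, not_containsCopy_cliquePacking (by omega) p,
    ?_⟩, ?_⟩
  · have := (cliquePacking (n - 1) p).two_mul_card_edgeSet
    rw [degSumIn_univ_cliquePacking hk] at this
    omega
  · rintro m ⟨G, hfree, rfl⟩
    have := G.two_mul_card_edgeSet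
    have hbound := degSumIn_le_packingDegSum hn hfree univ
    rw [card_univ, Fintype.card_fin] at hbound
    omega

theorem stmt19 (p n r : ℕ) (hn : n = 6 ∨ n = 7) (hp : n ≤ p)
    (hr : r ≤ n - 2) (hmod : p % (n - 1) = r) :
    exNum p (TnStar n) = ((n - 2) * p - r * (n - 1 - r)) / 2 :=
  stmt19_general p n r hn hmod
end
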